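/- arXiv:2312.02499 — 5 statements merged into one kernel-verified Lean document; each statement's English description precedes it below -/
import Mathlib

section
/- Let (M,g) be a Riemannian manifold with Levi-Civita connection ∇^g, and let ω be a (pre-)n-plectic form on M, i.e. a closed (n+1)-form (non-degenerate in the n-plectic case). Define the T*M-valued n-form ω̃ by ω̃(v_1,…,v_n) := ι_{v_1∧…∧v_n}ω. Then the covariant exterior derivative of ω̃ with respect to the Levi-Civita connection on T*M satisfies d^g_∇ ω̃ = dω + (−1)^n ∇^g ω. Consequently, ω̃ is a T*M-valued (pre-)(n−1)-plectic form with respect to ∇^g if and only if ∇^g ω = 0. -/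
open scoped BigOperators

/-- An algebraic model of the pair (C^∞(M), 𝔛(M)): a commutative ℝ-algebra `C` of
"functions" together with a `C`-module `X` of "vector fields" acting on `C` by
derivations and carrying a compatible Lie bracket (a Lie–Rinehart algebra). -/
structure LieRinehart (C X : Type*) [CommRing C] [Algebra ℝ C] [LieRing X] [Module C X] where
  act : X → Derivation ℝ C C
  act_add : ∀ u v : X, act (u + v) = act u + act v
  act_smul : ∀ (f : C) (v : X), act (f • v) = f • act v
  act_bracket : ∀ u v : X, act ⁅u, v⁆ = ⁅act u, act v⁆
  leibniz : ∀ (u : X) (f : C) (v : X), ⁅u, f • v⁆ = f • ⁅u, v⁆ + act u f • v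

/-- A vector bundle connection on the `C`-module `E` of sections of a vector bundle. -/
structure Conn (C X E : Type*) [CommRing C] [Algebra ℝ C] [LieRing X] [Module C X]
    [AddCommGroup E] [Module C E] (L : LieRinehart C X) where
  cov : X → E → E
  map_add_left : ∀ (u v : X) (s : E), cov (u + v) s = cov u s + cov v s
  map_smul_left : ∀ (f : C) (u : X) (s : E), cov (f • u) s = f • cov u s
  map_add_right : ∀ (u : X) (s t : E), cov u (s + t) = cov u s + cov u t
  leibniz : ∀ (u : X) (f : C) (s : E), cov u (f • s) = L.act u f • s + f • cov u s

/-- `insertPair v b i j` is the tuple `(b, v 0, …, v̌ i, …, v̌ j, …, v n)` (for `i < j`):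
`b` followed by `v` with its `i`-th and `j`-th entries removed. -/
def insertPair {α : Type*} {n : ℕ} (v : Fin (n + 1) → α) (b : α) (i j : Fin (n + 1)) :
    Fin n → α := fun k =>
  if (k : ℕ) = 0 then b
  else v ⟨if (k : ℕ) - 1 < (i : ℕ) then (k : ℕ) - 1
          else if (k : ℕ) < (j : ℕ) then (k : ℕ) else (k : ℕ) + 1, by
      have hk := k.isLt
      split_ifs <;> omega⟩

/-- `removeTwo v i j` is `v` with its `i`-th and `j`-th entries removed (for `i < j`). -/
def removeTwo {α : Type*} {n : ℕ} (v : Fin (n + 2) → α) (i j : Fin (n + 2)) : Fin n → α :=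
  fun k => v ⟨if (k : ℕ) < (i : ℕ) then (k : ℕ)
              else if (k : ℕ) + 1 < (j : ℕ) then (k : ℕ) + 1 else (k : ℕ) + 2, by
      have hk := k.isLt
      split_ifs <;> omega⟩

section Ops

variable {X E : Type*} [LieRing X] [AddCommGroup E]

/-- The covariant exterior derivative determined by a covariant derivative `cov`:
`(d^E_∇ φ)(v₀,…,vₙ) = Σᵢ (-1)ⁱ ∇_{vᵢ}(φ(…,v̌ᵢ,…)) + Σ_{i<j} (-1)^{i+j} φ(⁅vᵢ,vⱼ⁆,…,v̌ᵢ,…,v̌ⱼ,…)`. -/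
def extDerOp (cov : X → E → E) {n : ℕ} (φ : (Fin n → X) → E) :
    (Fin (n + 1) → X) → E := fun v =>
  (∑ i : Fin (n + 1), ((-1 : ℤ) ^ (i : ℕ)) • cov (v i) (φ (i.removeNth v)))
    + ∑ i : Fin (n + 1), ∑ j : Fin (n + 1),
        if (i : ℕ) < (j : ℕ) then
          ((-1 : ℤ) ^ ((i : ℕ) + (j : ℕ))) • φ (insertPair v ⁅v i, v j⁆ i j)
        else 0

/-- The covariant Lie derivative along `u` determined by a covariant derivative `cov`:
`(𝓛^∇_u φ)(v₁,…,vₙ) = ∇_u(φ(v₁,…,vₙ)) - Σᵢ φ(v₁,…,⁅u,vᵢ⁆,…,vₙ)`. -/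
def lieDerOp (cov : X → E → E) (u : X) {n : ℕ} (φ : (Fin n → X) → E) :
    (Fin n → X) → E := fun v =>
  cov u (φ v) - ∑ i : Fin n, φ (Function.update v i ⁅u, v i⁆)

/-- Interior product of a form with a vector field. -/
def interiorOp {X E : Type*} (u : X) {n : ℕ} (φ : (Fin (n + 1) → X) → E) : (Fin n → X) → E :=
  fun v => φ (Fin.cons u v)

/-- The curvature `R(u,w)s = ∇_u∇_w s - ∇_w∇_u s - ∇_{⁅u,w⁆} s` of a covariant derivative. -/
def curvOp (cov : X → E → E) (u w : X) (s : E) : E :=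
  cov u (cov w s) - cov w (cov u s) - cov ⁅u, w⁆ s

/-- The wedge `φ ∧ R^E_∇` of an `E`-valued `n`-form with the curvature `2`-form:
`(φ ∧ R)(v₀,…,v_{n+1}) = Σ_{i<j} (-1)^{i+j} R(vᵢ,vⱼ)(φ(…,v̌ᵢ,…,v̌ⱼ,…))`. -/
def wedgeCurvOp (cov : X → E → E) {n : ℕ} (φ : (Fin n → X) → E) :
    (Fin (n + 2) → X) → E := fun v =>
  ∑ i : Fin (n + 2), ∑ j : Fin (n + 2),
    if (i : ℕ) < (j : ℕ) then
      ((-1 : ℤ) ^ ((i : ℕ) + (j : ℕ))) • curvOp cov (v i) (v j) (φ (removeTwo v i j))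
    else 0

end Ops

/-- The covariant derivative `∇_Y φ` of an `E`-valued form `φ`, where `covE` differentiates
values and `covX` differentiates vector fields:
`(∇_Y φ)(v₁,…,vₙ) = ∇_Y(φ(v₁,…,vₙ)) - Σᵢ φ(v₁,…,∇_Y vᵢ,…,vₙ)`. -/
def covDerForm {X E : Type*} [AddCommGroup E]
    (covE : X → E → E) (covX : X → X → X) (Y : X) {n : ℕ}
    (φ : (Fin n → X) → E) : (Fin n → X) → E :=
  fun v => covE Y (φ v) - ∑ i : Fin n, φ (Function.update v i (covX Y (v i)))


section AuxTupleHelpers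

lemma aux_insertNth_eq_cons_comp {α : Type*} {n : ℕ} (i : Fin (n+1)) (c : α) (w : Fin n → α) :
    (i.insertNth c w : Fin (n+1) → α) = Fin.cons c w ∘ i.cycleRange := by
  funext j
  refine Fin.succAboveCases i ?_ ?_ j
  · simp [Fin.cycleRange_self]
  · intro k
    simp [Fin.cycleRange_succAbove]

lemma aux_removeNth_snoc_castSucc {α : Type*} {n : ℕ} (v : Fin (n+1) → α) (Y : α)
    (i : Fin (n+1)) :
    Fin.removeNth (α := fun _ => α) (Fin.castSucc i) (Fin.snoc v Y)
      = Fin.snoc (i.removeNth v) Y := by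
  funext k
  simp only [Fin.removeNth]
  refine Fin.lastCases ?_ ?_ k
  · rw [Fin.succAbove_of_le_castSucc]
    · simp
    · simp [Fin.le_def]; omega
  · intro k'
    rw [Fin.castSucc_succAbove_castSucc]
    simp [Fin.removeNth]

lemma aux_removeNth_snoc_last {α : Type*} {n : ℕ} (v : Fin (n+1) → α) (Y : α) :
    Fin.removeNth (α := fun _ => α) (Fin.last (n+1)) (Fin.snoc v Y) = v := by
  funext k
  simp only [Fin.removeNth]
  rw [Fin.succAbove_last]
  simp

lemma aux_val_succAbove {n : ℕ} (i : Fin (n+1)) (k : Fin n) :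
    ((i.succAbove k : Fin (n+1)) : ℕ) = if (k : ℕ) < (i : ℕ) then (k : ℕ) else (k : ℕ) + 1 := by
  simp only [Fin.succAbove, Fin.lt_def, Fin.coe_castSucc]
  split_ifs <;> rfl

lemma aux_insertPair_snoc_castSucc {α : Type*} {n : ℕ} (v : Fin (n+1) → α) (Y b : α)
    (i j : Fin (n+1)) (hij : i < j) :
    insertPair (Fin.snoc v Y) b i.castSucc j.castSucc = Fin.snoc (insertPair v b i j) Y := by
  funext k
  have hij' : (i : ℕ) < (j : ℕ) := hij
  have hj := j.isLt
  rcases k with ⟨c, hc⟩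
  simp only [insertPair, Fin.coe_castSucc]
  by_cases h0 : c = 0
  · subst h0
    rw [if_pos rfl]
    conv_rhs => rw [show (⟨0, hc⟩ : Fin (n+1)) = Fin.castSucc ⟨0, by omega⟩ from rfl,
      Fin.snoc_castSucc]
    simp [insertPair]
  · rw [if_neg h0]
    by_cases hcn : c < n
    · conv_rhs => rw [show (⟨c, hc⟩ : Fin (n+1)) = Fin.castSucc ⟨c, hcn⟩ from rfl,
        Fin.snoc_castSucc]
      simp only [insertPair, if_neg h0]
      conv_lhs => rw [show (⟨if c - 1 < (i:ℕ) then c - 1 else if c < (j:ℕ) then c else c + 1, by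
            split_ifs <;> omega⟩ : Fin (n+2))
          = Fin.castSucc ⟨if c - 1 < (i:ℕ) then c - 1 else if c < (j:ℕ) then c else c + 1, by
            split_ifs <;> omega⟩ from rfl, Fin.snoc_castSucc]
    · have hcn' : c = n := by omega
      conv_rhs => rw [show (⟨c, hc⟩ : Fin (n+1)) = Fin.last n from Fin.ext (by simp [hcn']),
        Fin.snoc_last]
      conv_lhs => rw [show (⟨if c - 1 < (i:ℕ) then c - 1 else if c < (j:ℕ) then c else c + 1, by
            split_ifs <;> omega⟩ : Fin (n+2)) = Fin.last (n+1) from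
          Fin.ext (by simp; split_ifs <;> omega), Fin.snoc_last]

lemma aux_insertPair_snoc_last {α : Type*} {n : ℕ} (v : Fin (n+1) → α) (Y b : α)
    (i : Fin (n+1)) :
    insertPair (Fin.snoc v Y) b i.castSucc (Fin.last (n+1)) = Fin.cons b (i.removeNth v) := by
  funext k
  rcases k with ⟨c, hc⟩
  simp only [insertPair, Fin.coe_castSucc, Fin.val_last]
  by_cases h0 : c = 0
  · subst h0
    rw [if_pos rfl]
    conv_rhs => rw [show (⟨0, hc⟩ : Fin (n+1)) = 0 from rfl, Fin.cons_zero]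
  · rw [if_neg h0]
    obtain ⟨c', rfl⟩ : ∃ c', c = c' + 1 := ⟨c - 1, by omega⟩
    conv_rhs => rw [show (⟨c' + 1, hc⟩ : Fin (n+1)) = Fin.succ ⟨c', by omega⟩ from rfl,
      Fin.cons_succ]
    simp only [Fin.removeNth]
    conv_lhs => rw [show (⟨if c' + 1 - 1 < (i:ℕ) then c' + 1 - 1 else
            if c' + 1 < n + 1 then c' + 1 else c' + 1 + 1, by
            split_ifs <;> omega⟩ : Fin (n+2))
        = Fin.castSucc (i.succAbove ⟨c', by omega⟩) from
        Fin.ext (by simp only [Fin.coe_castSucc, aux_val_succAbove]; split_ifs <;> omega),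
      Fin.snoc_castSucc]

end AuxTupleHelpers

section AuxSignHelpers

variable {C X : Type*} [CommRing C] [AddCommGroup X] [Module C X]

lemma aux_omega_insertNth {n : ℕ} (ω : AlternatingMap C X C (Fin (n+1)))
    (i : Fin (n+1)) (c : X) (w : Fin n → X) :
    ω (i.insertNth c w) = ((-1 : ℤ) ^ (i : ℕ)) • ω (Fin.cons c w) := by
  rw [aux_insertNth_eq_cons_comp, AlternatingMap.map_perm, Fin.sign_cycleRange]
  simp [Units.smul_def]

lemma aux_omega_cons {n : ℕ} (ω : AlternatingMap C X C (Fin (n+1))) (c : X) (w : Fin n → X) :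
    ω (Fin.cons c w) = ((-1 : ℤ) ^ n) • ω (Fin.snoc w c) := by
  have h := aux_omega_insertNth ω (Fin.last n) c w
  rw [Fin.insertNth_last'] at h
  rw [h, smul_smul, ← pow_add, Fin.val_last, Even.neg_one_pow ⟨n, rfl⟩, one_smul]

lemma aux_omega_update {n : ℕ} (ω : AlternatingMap C X C (Fin (n+1)))
    (v : Fin (n+1) → X) (i : Fin (n+1)) (c : X) :
    ω (Function.update v i c)
      = ((-1 : ℤ) ^ ((i : ℕ) + n)) • ω (Fin.snoc (i.removeNth v) c) := by
  rw [← Fin.insertNth_removeNth, aux_omega_insertNth, aux_omega_cons, smul_smul, ← pow_add]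

lemma aux_omega_cons_sub {n : ℕ} (ω : AlternatingMap C X C (Fin (n+1)))
    (a b : X) (w : Fin n → X) :
    ω (Fin.cons (a - b) w) = ω (Fin.cons a w) - ω (Fin.cons b w) := by
  have h : ∀ z : X, (Fin.cons z w : Fin (n+1) → X) = Function.update (Fin.cons a w) 0 z := by
    intro z; rw [Fin.update_cons_zero]
  rw [h (a-b), AlternatingMap.map_update_sub, ← h a, ← h b]

lemma aux_assemble {C : Type*} [CommRing C] (n : ℕ) (P Q R : Fin (n+1) → C) (U B : C) :
    (∑ i : Fin (n+1), ((-1:ℤ)^(i:ℕ)) • (P i - Q i)) + B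
      = (((∑ i : Fin (n+1), ((-1:ℤ)^(i:ℕ)) • P i) + ((-1:ℤ)^(n+1)) • U)
          + (B + ∑ i : Fin (n+1), ((-1:ℤ)^((i:ℕ)+(n+1)))
              • (((-1:ℤ)^n) • Q i - ((-1:ℤ)^n) • R i)))
        + ((-1:ℤ)^n) • (U - ∑ i : Fin (n+1), ((-1:ℤ)^((i:ℕ)+n)) • R i) := by
  rw [smul_sub, Finset.smul_sum]
  have hU : ((-1:ℤ)^(n+1)) • U = -(((-1:ℤ)^n) • U) := by
    rw [pow_succ, mul_neg_one, neg_smul]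
  rw [hU]
  have hterm : ∀ i : Fin (n+1), ((-1:ℤ)^(i:ℕ)) • (P i - Q i)
      = ((-1:ℤ)^(i:ℕ)) • P i
        + (((-1:ℤ)^((i:ℕ)+(n+1))) • (((-1:ℤ)^n) • Q i - ((-1:ℤ)^n) • R i)
          - ((-1:ℤ)^n) • (((-1:ℤ)^((i:ℕ)+n)) • R i)) := by
    intro i
    have e1 : ((-1:ℤ)^((i:ℕ)+(n+1))) * ((-1:ℤ)^n) = -((-1:ℤ)^(i:ℕ)) := by
      rw [← pow_add, show (i:ℕ)+(n+1)+n = ((i:ℕ)+1)+(n+n) by ring, pow_add,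
        Even.neg_one_pow (⟨n, rfl⟩ : Even (n+n)), mul_one, pow_succ, mul_neg_one]
    have e2 : ((-1:ℤ)^n) * ((-1:ℤ)^((i:ℕ)+n)) = ((-1:ℤ)^(i:ℕ)) := by
      rw [← pow_add, show n+((i:ℕ)+n) = (i:ℕ)+(n+n) by ring, pow_add,
        Even.neg_one_pow (⟨n, rfl⟩ : Even (n+n)), mul_one]
    rw [smul_sub ((-1:ℤ)^(i:ℕ)), smul_sub ((-1:ℤ)^((i:ℕ)+(n+1))), smul_smul, smul_smul,
      smul_smul, e1, e2]
    simp only [neg_smul, neg_neg]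
    abel
  rw [Finset.sum_congr rfl (fun i _ => hterm i), Finset.sum_add_distrib,
    Finset.sum_sub_distrib]
  abel

end AuxSignHelpers

/-- Proposition 2.1.
Let `(M,g)` be a Riemannian manifold with Levi-Civita connection `∇^g` (torsion-free and
metric), and let `ω` be a (pre-)`n`-plectic form on `M`, i.e. a closed `(n+1)`-form.
Define the `T*M`-valued `n`-form `ω̃` by `ω̃(v₁,…,vₙ) := ι_{v₁∧…∧vₙ} ω`, and equip `T*M`
with the Levi-Civita connection `(∇^g_u α)(Y) = u(α(Y)) - α(∇^g_u Y)`.  Then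
`d^g_∇ ω̃ = dω + (-1)ⁿ ∇^g ω`; consequently (`ω` being closed), `ω̃` is a `T*M`-valued
(pre-)`(n-1)`-plectic form with respect to `∇^g` (i.e. `d^g_∇ ω̃ = 0`) if and only if
`∇^g ω = 0`. -/
theorem tilde_form_extDer_and_plectic_iff
    {C X : Type*} [CommRing C] [Algebra ℝ C] [LieRing X] [Module C X]
    (L : LieRinehart C X)
    (g : X →ₗ[C] X →ₗ[C] C)
    (hgsymm : ∀ u v : X, g u v = g v u)
    (hgnondeg : ∀ u : X, (∀ v : X, g u v = 0) → u = 0)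
    (Dg : Conn C X X L)
    (htorsionfree : ∀ u v : X, Dg.cov u v - Dg.cov v u = ⁅u, v⁆)
    (hmetric : ∀ u v w : X, L.act u (g v w) = g (Dg.cov u v) w + g v (Dg.cov u w))
    (Dstar : Conn C X (X →ₗ[C] C) L)
    (hDstar : ∀ (u : X) (a : X →ₗ[C] C) (Y : X),
        (Dstar.cov u a) Y = L.act u (a Y) - a (Dg.cov u Y))
    {n : ℕ} (ω : AlternatingMap C X C (Fin (n + 1)))
    (hωnondeg : ∀ u : X, (∀ v : Fin n → X, ω (Fin.cons u v) = 0) → u = 0)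
    (hclosed : ∀ v : Fin (n + 2) → X, extDerOp (fun u f => L.act u f) (⇑ω) v = 0)
    (tilde : (Fin n → X) → (X →ₗ[C] C))
    (htilde : ∀ (v : Fin n → X) (Y : X), tilde v Y = ω (Fin.snoc v Y)) :
    (∀ (v : Fin (n + 1) → X) (Y : X),
        extDerOp Dstar.cov tilde v Y
          = extDerOp (fun u f => L.act u f) (⇑ω) (Fin.snoc v Y)
            + ((-1 : ℤ) ^ n) • covDerForm (fun u f => L.act u f) Dg.cov Y (⇑ω) v)
    ∧ ((∀ v : Fin (n + 1) → X, extDerOp Dstar.cov tilde v = 0)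
        ↔ ∀ (Y : X) (v : Fin (n + 1) → X),
            covDerForm (fun u f => L.act u f) Dg.cov Y (⇑ω) v = 0) := by
  have hzs : ∀ (z : ℤ) (f : X →ₗ[C] C) (Y : X), (z • f) Y = z • (f Y) := by
    intros; simp
  have key : ∀ (v : Fin (n + 1) → X) (Y : X),
      extDerOp Dstar.cov tilde v Y
        = extDerOp (fun u f => L.act u f) (⇑ω) (Fin.snoc v Y)
          + ((-1 : ℤ) ^ n) • covDerForm (fun u f => L.act u f) Dg.cov Y (⇑ω) v := by
    intro v Y
    have hLHS : extDerOp Dstar.cov tilde v Y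
        = (∑ i : Fin (n+1), ((-1:ℤ)^(i:ℕ)) •
            (L.act (v i) (ω (Fin.snoc (i.removeNth v) Y))
              - ω (Fin.snoc (i.removeNth v) (Dg.cov (v i) Y))))
          + ∑ i : Fin (n+1), ∑ j : Fin (n+1),
              (if (i:ℕ) < (j:ℕ) then
                ((-1:ℤ)^((i:ℕ)+(j:ℕ))) • ω (Fin.snoc (insertPair v ⁅v i, v j⁆ i j) Y)
               else 0) := by
      simp only [extDerOp, LinearMap.add_apply, LinearMap.sum_apply, hzs,
        apply_ite (fun (f : X →ₗ[C] C) => f Y), LinearMap.zero_apply, hDstar, htilde]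
    have hsum1 : (∑ I : Fin (n+1+1),
          ((-1:ℤ)^(I:ℕ)) • L.act (Fin.snoc (α := fun _ => X) v Y I) (ω (Fin.removeNth (α := fun _ => X) I (Fin.snoc v Y))))
        = (∑ i : Fin (n+1), ((-1:ℤ)^(i:ℕ)) • L.act (v i) (ω (Fin.snoc (i.removeNth v) Y)))
          + ((-1:ℤ)^(n+1)) • L.act Y (ω v) := by
      rw [Fin.sum_univ_castSucc]
      congr 1
      · refine Finset.sum_congr rfl fun i _ => ?_
        rw [Fin.snoc_castSucc, aux_removeNth_snoc_castSucc, Fin.coe_castSucc]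
      · rw [Fin.snoc_last, aux_removeNth_snoc_last, Fin.val_last]
    have hin : ∀ i : Fin (n+1),
        (∑ J : Fin (n+1+1), if ((Fin.castSucc i : Fin (n+1+1)) : ℕ) < (J:ℕ) then
            ((-1:ℤ)^(((Fin.castSucc i : Fin (n+1+1)):ℕ)+(J:ℕ))) •
              ω (insertPair (Fin.snoc v Y)
                  ⁅Fin.snoc (α := fun _ => X) v Y (Fin.castSucc i), Fin.snoc (α := fun _ => X) v Y J⁆ (Fin.castSucc i) J)
          else 0)
        = (∑ j : Fin (n+1), if (i:ℕ) < (j:ℕ) then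
              ((-1:ℤ)^((i:ℕ)+(j:ℕ))) • ω (Fin.snoc (insertPair v ⁅v i, v j⁆ i j) Y) else 0)
          + ((-1:ℤ)^((i:ℕ)+(n+1))) • ω (Fin.cons ⁅v i, Y⁆ (i.removeNth v)) := by
      intro i
      rw [Fin.sum_univ_castSucc]
      congr 1
      · refine Finset.sum_congr rfl fun j _ => ?_
        by_cases hij : (i:ℕ) < (j:ℕ)
        · rw [if_pos (by simpa using hij), if_pos hij, Fin.snoc_castSucc, Fin.snoc_castSucc,
            aux_insertPair_snoc_castSucc v Y _ i j hij]
          simp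
        · rw [if_neg (by simpa using hij), if_neg hij]
      · rw [if_pos (by simpa using i.isLt), Fin.snoc_castSucc, Fin.snoc_last,
          aux_insertPair_snoc_last]
        simp
    have hsum2 : (∑ I : Fin (n+1+1), ∑ J : Fin (n+1+1),
          if (I:ℕ) < (J:ℕ) then ((-1:ℤ)^((I:ℕ)+(J:ℕ))) •
            ω (insertPair (Fin.snoc v Y) ⁅Fin.snoc (α := fun _ => X) v Y I, Fin.snoc (α := fun _ => X) v Y J⁆ I J) else 0)
        = (∑ i : Fin (n+1), ∑ j : Fin (n+1), if (i:ℕ) < (j:ℕ) then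
              ((-1:ℤ)^((i:ℕ)+(j:ℕ))) • ω (Fin.snoc (insertPair v ⁅v i, v j⁆ i j) Y) else 0)
          + ∑ i : Fin (n+1), ((-1:ℤ)^((i:ℕ)+(n+1))) • ω (Fin.cons ⁅v i, Y⁆ (i.removeNth v)) := by
      rw [Fin.sum_univ_castSucc]
      have hlast : (∑ J : Fin (n+1+1),
          if ((Fin.last (n+1) : Fin (n+1+1)) : ℕ) < (J:ℕ) then
            ((-1:ℤ)^(((Fin.last (n+1) : Fin (n+1+1)):ℕ)+(J:ℕ))) •
              ω (insertPair (Fin.snoc v Y)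
                  ⁅Fin.snoc (α := fun _ => X) v Y (Fin.last (n+1)), Fin.snoc (α := fun _ => X) v Y J⁆ (Fin.last (n+1)) J)
          else 0) = 0 := by
        refine Finset.sum_eq_zero fun J _ => if_neg ?_
        have := J.isLt
        simp only [Fin.val_last]
        omega
      rw [hlast, add_zero, Finset.sum_congr rfl (fun i _ => hin i), Finset.sum_add_distrib]
    have hcons : ∀ i : Fin (n+1), ω (Fin.cons ⁅v i, Y⁆ (i.removeNth v))
        = ((-1:ℤ)^n) • ω (Fin.snoc (i.removeNth v) (Dg.cov (v i) Y))
          - ((-1:ℤ)^n) • ω (Fin.snoc (i.removeNth v) (Dg.cov Y (v i))) := by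
      intro i
      rw [← htorsionfree, aux_omega_cons_sub, aux_omega_cons, aux_omega_cons]
    have hK : (∑ i : Fin (n+1), ((-1:ℤ)^((i:ℕ)+(n+1))) • ω (Fin.cons ⁅v i, Y⁆ (i.removeNth v)))
        = ∑ i : Fin (n+1), ((-1:ℤ)^((i:ℕ)+(n+1))) •
            (((-1:ℤ)^n) • ω (Fin.snoc (i.removeNth v) (Dg.cov (v i) Y))
              - ((-1:ℤ)^n) • ω (Fin.snoc (i.removeNth v) (Dg.cov Y (v i)))) :=
      Finset.sum_congr rfl fun i _ => by rw [hcons i]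
    have hRHS : extDerOp (fun u f => L.act u f) (⇑ω) (Fin.snoc v Y)
        = ((∑ i : Fin (n+1), ((-1:ℤ)^(i:ℕ)) • L.act (v i) (ω (Fin.snoc (i.removeNth v) Y)))
            + ((-1:ℤ)^(n+1)) • L.act Y (ω v))
          + ((∑ i : Fin (n+1), ∑ j : Fin (n+1), if (i:ℕ) < (j:ℕ) then
                ((-1:ℤ)^((i:ℕ)+(j:ℕ))) • ω (Fin.snoc (insertPair v ⁅v i, v j⁆ i j) Y) else 0)
              + ∑ i : Fin (n+1), ((-1:ℤ)^((i:ℕ)+(n+1)))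
                  • (((-1:ℤ)^n) • ω (Fin.snoc (i.removeNth v) (Dg.cov (v i) Y))
                    - ((-1:ℤ)^n) • ω (Fin.snoc (i.removeNth v) (Dg.cov Y (v i))))) := by
      simp only [extDerOp]
      rw [hsum1, hsum2, hK]
    have hcov : covDerForm (fun u f => L.act u f) Dg.cov Y (⇑ω) v
        = L.act Y (ω v) - ∑ i : Fin (n+1),
            ((-1:ℤ)^((i:ℕ)+n)) • ω (Fin.snoc (i.removeNth v) (Dg.cov Y (v i))) := by
      simp only [covDerForm]
      congr 1
      exact Finset.sum_congr rfl fun i _ => aux_omega_update ω v i _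
    rw [hLHS, hRHS, hcov]
    exact aux_assemble n
      (fun i => L.act (v i) (ω (Fin.snoc (i.removeNth v) Y)))
      (fun i => ω (Fin.snoc (i.removeNth v) (Dg.cov (v i) Y)))
      (fun i => ω (Fin.snoc (i.removeNth v) (Dg.cov Y (v i))))
      (L.act Y (ω v))
      (∑ i : Fin (n+1), ∑ j : Fin (n+1), if (i:ℕ) < (j:ℕ) then
        ((-1:ℤ)^((i:ℕ)+(j:ℕ))) • ω (Fin.snoc (insertPair v ⁅v i, v j⁆ i j) Y) else 0)
  refine ⟨key, ?_, ?_⟩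
  · intro h Y v
    have h1 := key v Y
    rw [h v, hclosed (Fin.snoc v Y), LinearMap.zero_apply, zero_add] at h1
    have h2 : ((-1:ℤ)^n) • (((-1:ℤ)^n) •
        covDerForm (fun u f => L.act u f) Dg.cov Y (⇑ω) v) = 0 := by
      rw [← h1, smul_zero]
    rwa [smul_smul, ← pow_add, Even.neg_one_pow (⟨n, rfl⟩ : Even (n+n)), one_smul] at h2
  · intro h v
    refine LinearMap.ext fun Y => ?_
    rw [LinearMap.zero_apply, key v Y, hclosed (Fin.snoc v Y), h Y v, smul_zero, add_zero]
end

section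
/- Let (M,g,𝒬) be a quaternionic Kähler manifold with local frames {ω_1,ω_2,ω_3} of the rank-3 subbundle 𝒬⊂Λ^2T^*M satisfying the structure equations dω_i + Σ_{j=1}^3 α_{ij}∧ω_j = 0 with 1-forms α_{ij} = −α_{ji} determined by ∇^g ω_j = Σ_i α_{ij}⊗ω_i. Then the 𝒬-valued 2-form Θ = Σ_{i=1}^3 ω_i ⊗ ω_i is globally well-defined, closed under the covariant exterior derivative of the Levi-Civita connection (d^g_∇Θ = 0), and non-degenerate; hence every quaternionic Kähler manifold is a 𝒬-valued 1-plectic manifold. -/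
open scoped BigOperators

private lemma extDer_three {X E : Type*} [LieRing X] [AddCommGroup E] (cov : X → E → E)
    (φ : (Fin 2 → X) → E) (v : Fin 3 → X) :
    extDerOp cov φ v = cov (v 0) (φ ![v 1, v 2]) - cov (v 1) (φ ![v 0, v 2])
      + cov (v 2) (φ ![v 0, v 1]) - φ ![⁅v 0, v 1⁆, v 2] + φ ![⁅v 0, v 2⁆, v 1]
      - φ ![⁅v 1, v 2⁆, v 0] := by
  have rem0 : Fin.removeNth 0 v = ![v 1, v 2] := by funext k; fin_cases k <;> rfl
  have rem1 : Fin.removeNth 1 v = ![v 0, v 2] := by funext k; fin_cases k <;> rfl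
  have rem2 : Fin.removeNth 2 v = ![v 0, v 1] := by funext k; fin_cases k <;> rfl
  have ins01 : insertPair v ⁅v 0, v 1⁆ 0 1 = ![⁅v 0, v 1⁆, v 2] := by
    funext k; fin_cases k <;> rfl
  have ins02 : insertPair v ⁅v 0, v 2⁆ 0 2 = ![⁅v 0, v 2⁆, v 1] := by
    funext k; fin_cases k <;> rfl
  have ins12 : insertPair v ⁅v 1, v 2⁆ 1 2 = ![⁅v 1, v 2⁆, v 0] := by
    funext k; fin_cases k <;> rfl
  show (∑ i : Fin 3, ((-1 : ℤ) ^ (i : ℕ)) • cov (v i) (φ (i.removeNth v)))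
    + ∑ i : Fin 3, ∑ j : Fin 3,
        (if (i : ℕ) < (j : ℕ) then
          ((-1 : ℤ) ^ ((i : ℕ) + (j : ℕ))) • φ (insertPair v ⁅v i, v j⁆ i j)
        else 0) = _
  rw [Fin.sum_univ_three, Fin.sum_univ_three]
  rw [Fin.sum_univ_three, Fin.sum_univ_three, Fin.sum_univ_three]
  rw [rem0, rem1, rem2, ins01, ins02, ins12]
  norm_num
  abel

/-- Lemma 4.2.
Let `(M, g, 𝒬)` be a quaternionic Kähler manifold: `Q` models the sections of the rank-3
subbundle `𝒬 ⊂ Λ²T*M` with frame `q₁, q₂, q₃` corresponding to the fundamental local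
2-forms `ω₁, ω₂, ω₃`, the Levi-Civita connection `∇^g` preserves `𝒬` via
`∇^g_u ωⱼ = Σᵢ α_{ij}(u) ωᵢ` with `α_{ij} = -α_{ji}`, and the structure equations
`dωᵢ + Σⱼ α_{ij} ∧ ωⱼ = 0` hold.  Then the `𝒬`-valued 2-form `Θ = Σᵢ ωᵢ ⊗ ωᵢ` is closed
under the covariant exterior derivative of the Levi-Civita connection (`d^g_∇ Θ = 0`) and
non-degenerate; hence every quaternionic Kähler manifold is a `𝒬`-valued 1-plectic
manifold. -/
theorem quaternionic_kahler_is_Q_valued_one_plectic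
    {C X Q : Type*} [CommRing C] [Algebra ℝ C] [LieRing X] [Module C X]
    [AddCommGroup Q] [Module C Q]
    (L : LieRinehart C X)
    -- the Riemannian metric and its Levi-Civita connection
    (g : X →ₗ[C] X →ₗ[C] C)
    (hgsymm : ∀ u v : X, g u v = g v u)
    (hgnondeg : ∀ u : X, (∀ v : X, g u v = 0) → u = 0)
    (Dg : Conn C X X L)
    (htorsionfree : ∀ u v : X, Dg.cov u v - Dg.cov v u = ⁅u, v⁆)
    (hmetric : ∀ u v w : X, L.act u (g v w) = g (Dg.cov u v) w + g v (Dg.cov u w))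
    -- the bundle 𝒬 with the connection induced by ∇^g, its frame q and the 2-forms ω
    (DQ : Conn C X Q L)
    (ω : Fin 3 → AlternatingMap C X C (Fin 2))
    (q : Fin 3 → Q)
    (hframe : LinearIndependent C q)
    (hωnondeg : ∀ (i : Fin 3) (u : X), (∀ w : X, (ω i) ![u, w] = 0) → u = 0)
    -- ∇^g preserves 𝒬:  ∇^g_u ωⱼ = Σᵢ α_{ij}(u) • ωᵢ, with α_{ij} = -α_{ji}
    (α : Fin 3 → Fin 3 → (X →ₗ[C] C))
    (hαskew : ∀ i j : Fin 3, α i j = -α j i)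
    (hconn : ∀ (u : X) (j : Fin 3), DQ.cov u (q j) = ∑ i : Fin 3, α i j u • q i)
    -- the structure equations dωᵢ + Σⱼ α_{ij} ∧ ωⱼ = 0
    (hstruct : ∀ (i : Fin 3) (u v w : X),
        extDerOp (fun (x : X) (f : C) => L.act x f) (⇑(ω i)) ![u, v, w]
          + ∑ j : Fin 3,
              (α i j u • (ω j) ![v, w] - α i j v • (ω j) ![u, w] + α i j w • (ω j) ![u, v])
          = 0) :
    -- Θ = Σᵢ ωᵢ ⊗ ωᵢ is d^g_∇-closed and non-degenerate
    (∀ v : Fin 3 → X,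
        extDerOp DQ.cov (fun w : Fin 2 → X => ∑ i : Fin 3, (ω i) w • q i) v = 0)
    ∧ (∀ u : X, (∀ w : X, (∑ i : Fin 3, (ω i) ![u, w] • q i) = 0) → u = 0) := by
  constructor
  · intro v
    -- the structure equations, fully expanded
    have hS : ∀ i : Fin 3,
        L.act (v 0) ((ω i) ![v 1, v 2]) - L.act (v 1) ((ω i) ![v 0, v 2])
          + L.act (v 2) ((ω i) ![v 0, v 1])
          - (ω i) ![⁅v 0, v 1⁆, v 2] + (ω i) ![⁅v 0, v 2⁆, v 1] - (ω i) ![⁅v 1, v 2⁆, v 0]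
          + ((α i 0 (v 0) * (ω 0) ![v 1, v 2] - α i 0 (v 1) * (ω 0) ![v 0, v 2]
              + α i 0 (v 2) * (ω 0) ![v 0, v 1])
            + (α i 1 (v 0) * (ω 1) ![v 1, v 2] - α i 1 (v 1) * (ω 1) ![v 0, v 2]
              + α i 1 (v 2) * (ω 1) ![v 0, v 1])
            + (α i 2 (v 0) * (ω 2) ![v 1, v 2] - α i 2 (v 1) * (ω 2) ![v 0, v 2]
              + α i 2 (v 2) * (ω 2) ![v 0, v 1])) = 0 := by
      intro i
      have h := hstruct i (v 0) (v 1) (v 2)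
      rw [extDer_three] at h
      simp only [Fin.sum_univ_three, smul_eq_mul, Matrix.cons_val_zero, Matrix.cons_val_one,
        Matrix.head_cons, Matrix.cons_val_two, Matrix.tail_cons] at h
      linear_combination h
    rw [extDer_three]
    simp only [Fin.sum_univ_three, DQ.map_add_right, DQ.leibniz, hconn,
      smul_add, smul_smul]
    match_scalars
    · linear_combination hS 0
    · linear_combination hS 1
    · linear_combination hS 2
  · intro u hu
    have h := Fintype.linearIndependent_iff.mp hframe
    refine hωnondeg 0 u fun w => ?_
    exact h (fun i => (ω i) ![u, w]) (hu w) 0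
end

section
/- Let (M,ω,E,∇^E) be an E-valued 1-plectic manifold, A a Lie algebroid over M with connection ∇^A, and μ∈Γ(A^*⊗E) an E-valued homotopy momentum section that is compatible with A. Then μ reverses brackets: μ^{[α,β]} = −{μ^α, μ^β} = −ω(ρ(α),ρ(β)) for all sections α,β of A. -/
open scoped BigOperators

/-- An algebraic model of a Lie algebroid `(A, M, ρ, [·,·])` over the
Lie–Rinehart pair `(C, X)`: the `C`-module `B` of sections of `A` carries a Lie bracket
and an anchor `ρ : B → X` satisfying the Leibniz rule
`⁅α, f • β⁆ = f • ⁅α, β⁆ + (ρ(α)f) • β`. -/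
structure LieAlgebroidOn (C X : Type*) [CommRing C] [Algebra ℝ C] [LieRing X] [Module C X]
    (L : LieRinehart C X) (B : Type*) [LieRing B] [Module C B] where
  ρ : B → X
  ρ_add : ∀ a b : B, ρ (a + b) = ρ a + ρ b
  ρ_smul : ∀ (f : C) (a : B), ρ (f • a) = f • ρ a
  ρ_bracket : ∀ a b : B, ρ ⁅a, b⁆ = ⁅ρ a, ρ b⁆
  leibniz : ∀ (a : B) (f : C) (b : B), ⁅a, f • b⁆ = f • ⁅a, b⁆ + L.act (ρ a) f • b

/-- Proposition 5.3.
Let `(M, ω, E, ∇^E)` be an `E`-valued 1-plectic manifold, `A` a Lie algebroid over `M`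
with connection `∇^A`, and `μ ∈ Γ(A^* ⊗ E)` an `E`-valued homotopy momentum section
(`∇^{A^*⊗E} μ = ι_ρ¹ ω` and `ð_℧ μ = -ι_ρ² ω`) that is compatible with `A`
(`∇^E (μ^α) = (∇^{A^*⊗E} μ)^α` for all `α ∈ Γ(A)`).  Then `μ` reverses brackets:
`μ^{⁅α,β⁆} = -{μ^α, μ^β} = -ω(ρ(α), ρ(β))` for all sections `α, β` of `A`. -/
theorem compatible_HMS_reverses_brackets
    {C X B E : Type*} [CommRing C] [Algebra ℝ C] [LieRing X] [Module C X]
    [LieRing B] [Module C B] [AddCommGroup E] [Module C E]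
    (L : LieRinehart C X) (A : LieAlgebroidOn C X L B)
    (DE : Conn C X E L) (DA : Conn C X B L)
    -- the E-valued 1-plectic form
    (ω : AlternatingMap C X E (Fin 2))
    (hclosed : ∀ v : Fin 3 → X, extDerOp DE.cov (⇑ω) v = 0)
    (hnondeg : ∀ u : X, (∀ w : X, ω ![u, w] = 0) → u = 0)
    -- the E-valued homotopy momentum section
    (μ : B →ₗ[C] E)
    (hμ1 : ∀ (u : X) (a : B), DE.cov u (μ a) - μ (DA.cov u a) = ω ![A.ρ a, u])
    (hμ2 : ∀ a b : B,
        DE.cov (A.ρ a) (μ b) - DE.cov (A.ρ b) (μ a) - μ ⁅a, b⁆ = - ω ![A.ρ a, A.ρ b])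
    -- compatibility with A:  ∇^E(μ^α) = (∇^{A^*⊗E} μ)^α
    (hcompat : ∀ (u : X) (a : B),
        DE.cov u (μ a) = DE.cov u (μ a) - μ (DA.cov u a)) :
    ∀ a b : B, μ ⁅a, b⁆ = - ω ![A.ρ a, A.ρ b] := by
  intro a b
  have hz : ∀ (u : X) (c : B), DE.cov u (μ c) = ω ![A.ρ c, u] := by
    intro u c
    have h := hcompat u c
    have hμc : μ (DA.cov u c) = 0 := sub_eq_self.mp h.symm
    have := hμ1 u c
    rw [hμc, sub_zero] at this
    exact this
  have h2 := hμ2 a b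
  rw [hz (A.ρ a) b, hz (A.ρ b) a] at h2
  have hanti : ω ![A.ρ b, A.ρ a] = - ω ![A.ρ a, A.ρ b] := by
    have := ω.map_swap ![A.ρ a, A.ρ b] (i := 0) (j := 1) (by decide)
    have heq : (![A.ρ a, A.ρ b] ∘ ⇑(Equiv.swap 0 1)) = ![A.ρ b, A.ρ a] := by
      funext k; fin_cases k <;> simp
    rw [heq] at this
    exact this
  rw [hanti] at h2
  have h4 := sub_eq_iff_eq_add.mp h2
  have h5 : μ ⁅a, b⁆ = (-ω ![A.ρ a, A.ρ b] - ω ![A.ρ a, A.ρ b]) - (-ω ![A.ρ a, A.ρ b]) :=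
    eq_sub_of_add_eq (by rw [add_comm]; exact h4.symm)
  rw [h5]; abel
end

section
/- Let (M,ω,E,∇^E) be an E-valued 1-plectic manifold, A a Lie algebroid with connection ∇^A, and μ∈Γ(A^*⊗E) an E-valued homotopy momentum section compatible with A. Then the set Γ_μ(E) = {μ^α : α∈Γ(A)} ⊂ Γ(E), equipped with the skew-symmetric bracket {μ^α,μ^β} := ω(ρ(α),ρ(β)), is a Lie algebra; in particular the Jacobi identity {{μ^α,μ^β},μ^γ} + {{μ^β,μ^γ},μ^α} + {{μ^γ,μ^α},μ^β} = 0 holds, as a consequence of d^E_∇ω = 0. -/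
open scoped BigOperators

/-- Proposition 5.5.
Let `(M, ω, E, ∇^E)` be an `E`-valued 1-plectic manifold, `A` a Lie algebroid with
connection `∇^A`, and `μ ∈ Γ(A^* ⊗ E)` an `E`-valued homotopy momentum section compatible
with `A`.  Then `Γ_μ(E) = {μ^α : α ∈ Γ(A)}` is closed under the skew-symmetric bracket
`{μ^α, μ^β} := ω(ρ(α), ρ(β))` and this bracket satisfies the Jacobi identity
`{{μ^α,μ^β},μ^γ} + {{μ^β,μ^γ},μ^α} + {{μ^γ,μ^α},μ^β} = 0` (a consequence of
`d^E_∇ ω = 0`); i.e. `Γ_μ(E)` is a Lie algebra.  Since `{μ^α,μ^β} = μ^{-⁅α,β⁆}`, the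
Jacobi identity reads `ω(ρ⁅α,β⁆,ρ(γ)) + ω(ρ⁅β,γ⁆,ρ(α)) + ω(ρ⁅γ,α⁆,ρ(β)) = 0`. -/
theorem range_of_compatible_HMS_is_Lie_algebra
    {C X B E : Type*} [CommRing C] [Algebra ℝ C] [LieRing X] [Module C X]
    [LieRing B] [Module C B] [AddCommGroup E] [Module C E]
    (L : LieRinehart C X) (A : LieAlgebroidOn C X L B)
    (DE : Conn C X E L) (DA : Conn C X B L)
    -- the E-valued 1-plectic form
    (ω : AlternatingMap C X E (Fin 2))
    (hclosed : ∀ v : Fin 3 → X, extDerOp DE.cov (⇑ω) v = 0)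
    (hnondeg : ∀ u : X, (∀ w : X, ω ![u, w] = 0) → u = 0)
    -- the E-valued homotopy momentum section
    (μ : B →ₗ[C] E)
    (hμ1 : ∀ (u : X) (a : B), DE.cov u (μ a) - μ (DA.cov u a) = ω ![A.ρ a, u])
    (hμ2 : ∀ a b : B,
        DE.cov (A.ρ a) (μ b) - DE.cov (A.ρ b) (μ a) - μ ⁅a, b⁆ = - ω ![A.ρ a, A.ρ b])
    -- compatibility with A
    (hcompat : ∀ (u : X) (a : B),
        DE.cov u (μ a) = DE.cov u (μ a) - μ (DA.cov u a)) :
    -- the bracket {μ^α, μ^β} = ω(ρα, ρβ) takes values in Γ_μ(E) = range μ …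
    (∀ a b : B, ∃ c : B, ω ![A.ρ a, A.ρ b] = μ c)
    -- … it is skew-symmetric …
    ∧ (∀ a b : B, ω ![A.ρ a, A.ρ b] = - ω ![A.ρ b, A.ρ a])
    -- … and it satisfies the Jacobi identity (written via {μ^α,μ^β} = μ^{-⁅α,β⁆})
    ∧ (∀ a b c : B,
        ω ![A.ρ ⁅a, b⁆, A.ρ c] + ω ![A.ρ ⁅b, c⁆, A.ρ a] + ω ![A.ρ ⁅c, a⁆, A.ρ b] = 0) := by
    -- compatibility kills μ ∘ DA.cov
  have hzero : ∀ (u : X) (a : B), μ (DA.cov u a) = 0 := by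
    intro u a
    have h := hcompat u a
    have : μ (DA.cov u a) = DE.cov u (μ a) - (DE.cov u (μ a) - μ (DA.cov u a)) := by abel
    rw [this, ← h]; abel
  have hμ1' : ∀ (u : X) (a : B), DE.cov u (μ a) = ω ![A.ρ a, u] := by
    intro u a
    have := hμ1 u a
    rwa [hzero, sub_zero] at this
  have hskew : ∀ u w : X, ω ![u, w] = - ω ![w, u] := by
    intro u w
    have h01 : (0 : Fin 2) ≠ 1 := by decide
    have := ω.map_swap ![w, u] h01
    have hv : (![w, u] ∘ Equiv.swap (0 : Fin 2) 1) = ![u, w] := by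
      funext i; fin_cases i <;> rfl
    rw [hv] at this
    exact this
  have hkey : ∀ a b : B, ω ![A.ρ a, A.ρ b] = - μ ⁅a, b⁆ := by
    intro a b
    have h2 := hμ2 a b
    rw [hμ1' (A.ρ a) b, hμ1' (A.ρ b) a] at h2
    rw [hskew (A.ρ b) (A.ρ a)] at h2
    have h3 : (-ω ![A.ρ a, A.ρ b] - ω ![A.ρ a, A.ρ b] - μ ⁅a, b⁆)
        - (-ω ![A.ρ a, A.ρ b]) = 0 := sub_eq_zero.mpr h2
    have h4 : -ω ![A.ρ a, A.ρ b] - μ ⁅a, b⁆ = 0 := by rw [← h3]; abel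
    have h5 : ω ![A.ρ a, A.ρ b] + μ ⁅a, b⁆ = 0 := by rw [← neg_zero, ← h4]; abel
    exact eq_neg_of_add_eq_zero_left h5
  refine ⟨fun a b => ⟨-⁅a, b⁆, by rw [hkey, map_neg]⟩,
    fun a b => hskew _ _, fun a b c => ?_⟩
  rw [hkey, hkey, hkey, ← map_neg, ← map_neg, ← map_neg, ← map_add, ← map_add]
  have h0 : (-⁅⁅a, b⁆, c⁆ + -⁅⁅b, c⁆, a⁆ + -⁅⁅c, a⁆, b⁆ : B) = 0 := by
    rw [lie_lie a b c, ← lie_skew ⁅b, c⁆ a, ← lie_skew ⁅c, a⁆ b, ← lie_skew c a, lie_neg]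
    abel
  rw [h0, map_zero]
end

section
/- Let μ∈Γ(A^*⊗V) be a V-valued homotopy momentum section on a V-valued 1-plectic manifold (M,ω,V×M,𝐝), with A a Lie algebroid with connection ∇^A, and assume M_μ := μ^{-1}(0̂) is an embedded submanifold of M. Then at each z∈M_μ one has T_zM_μ ⊆ ker(∇^{A^*⊗V}μ)_z; moreover ker(∇^{A^*⊗V}μ)_z = {v∈T_zM : ω_z(v,ρ(α)_z) = 0 for all α∈Γ(A)} = 𝒟(z)^ω, where 𝒟(z) = span{ρ(α)_z : α∈Γ(A)}; hence T_zM_μ ⊆ 𝒟(z)^ω. -/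
open scoped Topology

noncomputable section

variable {H A₀ V Hq : Type*}
  [NormedAddCommGroup H] [NormedSpace ℝ H]
  [NormedAddCommGroup A₀] [NormedSpace ℝ A₀]
  [NormedAddCommGroup V] [NormedSpace ℝ V]

/-- The set of tangent vectors at `z` to a subset `S` of the model space, realized by
smooth curves lying in `S`. -/
def tangentAt (S : Set H) (z : H) : Set H :=
  {v | ∃ γ : ℝ → H, (∀ t : ℝ, γ t ∈ S) ∧ γ 0 = z ∧ HasDerivAt γ v 0}

/-- The exterior derivative of a `V`-valued 2-form on the model space `H`:
`(𝐝ω)(x)(u,v,w) = (D_u ω)(v,w) - (D_v ω)(u,w) + (D_w ω)(u,v)`. -/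
def extDer2 (ω : H → H →L[ℝ] H →L[ℝ] V) (x : H) (u v w : H) : V :=
  fderiv ℝ (fun y => ω y v w) x u - fderiv ℝ (fun y => ω y u w) x v
    + fderiv ℝ (fun y => ω y u v) x w

/-- A piece of a local flow of the vector field `ρ(α)` associated to a section
`α : M → A₀` of the Lie algebroid: on its domain, `map x = curve x t` follows an integral
curve of `ρ(α)` starting at `x`. -/
structure FlowPiece (ρ : H → A₀ →L[ℝ] H) where
  /-- the section `α` of the Lie algebroid -/
  sec : H → A₀
  /-- the flow time -/
  time : ℝ
  /-- the domain of the local transformation -/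
  dom : Set H
  /-- the integral curves -/
  curve : H → ℝ → H
  curve_init : ∀ x ∈ dom, curve x 0 = x
  curve_deriv : ∀ x ∈ dom, ∀ s : ℝ,
    HasDerivAt (curve x) (ρ (curve x s) (sec (curve x s))) s

/-- The local transformation defined by a flow piece. -/
def FlowPiece.map {ρ : H → A₀ →L[ℝ] H} (P : FlowPiece ρ) : H → H :=
  fun x => P.curve x P.time

/-- A flow piece preserves the zero level set `M_μ = μ⁻¹(0̂)` (i.e. its generating
section is a section of `A_μ`). -/
def FlowPiece.PreservesZero {ρ : H → A₀ →L[ℝ] H} (μ : H → A₀ →L[ℝ] V)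
    (P : FlowPiece ρ) : Prop :=
  ∀ x ∈ P.dom, μ x = 0 → ∀ s : ℝ, μ (P.curve x s) = 0

/-- Application of a composite of flow pieces (last element of the list acts first). -/
def applyList {ρ : H → A₀ →L[ℝ] H} : List (FlowPiece ρ) → H → H
  | [], x => x
  | P :: l, x => P.map (applyList l x)

/-- The domain of a composite of flow pieces. -/
def inDomList {ρ : H → A₀ →L[ℝ] H} : List (FlowPiece ρ) → H → Prop
  | [], _ => True
  | P :: l, x => inDomList l x ∧ applyList l x ∈ P.dom

/-- `z'` lies in the `𝒫_μ`-orbit of `z`: it is reached from `z` by an element of the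
pseudogroup generated by the local flows of `ρ(α)` for sections `α` of `A_μ`. -/
def PmuRel (ρ : H → A₀ →L[ℝ] H) (μ : H → A₀ →L[ℝ] V) (z z' : H) : Prop :=
  ∃ l : List (FlowPiece ρ),
    (∀ P ∈ l, P.PreservesZero μ) ∧ inDomList l z ∧ applyList l z = z'

/-- `z'` lies in the `𝒫_ρ`-orbit (the leaf `𝓛_ρ(z)` of the characteristic foliation)
of `z`. -/
def leafRel (ρ : H → A₀ →L[ℝ] H) (z z' : H) : Prop :=
  ∃ l : List (FlowPiece ρ), inDomList l z ∧ applyList l z = z'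

/-- `z'` lies in the `𝒫⁰_ρ`-orbit of `z`: it is reached from `z` by an element `G` of the
pseudogroup `𝒫_ρ` with `μ ∘ G = 0̂` on its domain. -/
def PzeroRel (ρ : H → A₀ →L[ℝ] H) (μ : H → A₀ →L[ℝ] V) (z z' : H) : Prop :=
  ∃ l : List (FlowPiece ρ),
    (∀ x : H, inDomList l x → μ (applyList l x) = 0) ∧ inDomList l z ∧ applyList l z = z'

end

/-- Lemma 6.5.
(Model: `M` is an open chart `H`, the trivial bundle has fibre `V` with the trivial
connection `𝐝`, `Γ(A)` is modelled by maps `H → A₀` with pointwise anchor `ρ`, `Γ` is the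
connection `∇^A` and `(∇^{A^*⊗V}_v μ)(a) = (D_v μ)(a) - μ(Γ(v)a)`.)
Let `μ ∈ Γ(A^* ⊗ V)` be a `V`-valued homotopy momentum section
(`∇^{A^*⊗V} μ = ι_ρ¹ ω` and `ð_℧ μ = -ι_ρ² ω`) on a `V`-valued 1-plectic manifold
`(M, ω, V × M, 𝐝)`, and assume `M_μ = μ⁻¹(0̂)` is an (embedded) submanifold.  Then at
each `z ∈ M_μ`:
`T_z M_μ ⊆ ker (∇^{A^*⊗V} μ)_z`;  moreover
`ker (∇^{A^*⊗V} μ)_z = {v : ω_z(v, ρ(α)_z) = 0 ∀ α} = 𝒟(z)^ω`;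
hence `T_z M_μ ⊆ 𝒟(z)^ω`. -/
theorem tangent_of_zero_level_in_omega_orthogonal
    {H A₀ V : Type*}
    [NormedAddCommGroup H] [NormedSpace ℝ H]
    [NormedAddCommGroup A₀] [NormedSpace ℝ A₀]
    [NormedAddCommGroup V] [NormedSpace ℝ V]
    -- the V-valued 1-plectic form ω
    (ω : H → H →L[ℝ] H →L[ℝ] V)
    (hωalt : ∀ (x : H) (u : H), ω x u u = 0)
    (hωclosed : ∀ (x : H) (u v w : H), extDer2 ω x u v w = 0)
    (hωnondeg : ∀ (x : H) (u : H), (∀ v : H, ω x u v = 0) → u = 0)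
    -- the Lie algebroid data: anchor ρ, bracket br on sections, connection coefficients Γ
    (ρ : H → A₀ →L[ℝ] H)
    (br : (H → A₀) → (H → A₀) → (H → A₀))
    (Γ : H → H →L[ℝ] A₀ →L[ℝ] A₀)
    -- the V-valued homotopy momentum section μ
    (μ : H → A₀ →L[ℝ] V)
    (hμdiff : Differentiable ℝ μ)
    (hμ1 : ∀ (x v : H) (a : A₀),
        fderiv ℝ μ x v a - μ x (Γ x v a) = ω x (ρ x a) v)
    (hμ2 : ∀ α β : H → A₀, Differentiable ℝ α → Differentiable ℝ β → ∀ x : H,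
        fderiv ℝ (fun y => μ y (β y)) x (ρ x (α x))
            - fderiv ℝ (fun y => μ y (α y)) x (ρ x (β x)) - μ x (br α β x)
          = - ω x (ρ x (α x)) (ρ x (β x)))
    -- a point of M_μ = μ⁻¹(0̂)
    (z : H) (hz : μ z = 0) :
    -- T_z M_μ ⊆ ker (∇^{A^*⊗V} μ)_z
    (∀ v ∈ tangentAt {x : H | μ x = 0} z, ∀ a : A₀,
        fderiv ℝ μ z v a - μ z (Γ z v a) = 0)
    -- ker (∇^{A^*⊗V} μ)_z = 𝒟(z)^ω
    ∧ (∀ v : H, (∀ a : A₀, fderiv ℝ μ z v a - μ z (Γ z v a) = 0)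
          ↔ (∀ a : A₀, ω z v (ρ z a) = 0))
    -- hence T_z M_μ ⊆ 𝒟(z)^ω
    ∧ (∀ v ∈ tangentAt {x : H | μ x = 0} z, ∀ a : A₀, ω z v (ρ z a) = 0) := by
  -- antisymmetry of ω
  have hanti : ∀ (x u v : H), ω x u v = - ω x v u := by
    intro x u v
    have h := hωalt x (u + v)
    simp only [map_add, ContinuousLinearMap.add_apply, hωalt x u, hωalt x v,
      zero_add, add_zero] at h
    exact eq_neg_of_add_eq_zero_left (by rw [add_comm] at h; exact h)
  -- the kernel of ∇μ at z equals 𝒟(z)^ω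
  have hker : ∀ v : H, (∀ a : A₀, fderiv ℝ μ z v a - μ z (Γ z v a) = 0)
      ↔ (∀ a : A₀, ω z v (ρ z a) = 0) := by
    intro v
    constructor
    · intro h a
      have := hμ1 z v a
      rw [h a] at this
      rw [hanti z v (ρ z a), ← this, neg_zero]
    · intro h a
      rw [hμ1 z v a, hanti z (ρ z a) v, h a, neg_zero]
  -- tangent vectors are in the kernel
  have htan : ∀ v ∈ tangentAt {x : H | μ x = 0} z, ∀ a : A₀,
      fderiv ℝ μ z v a - μ z (Γ z v a) = 0 := by
    rintro v ⟨γ, hγ, hγ0, hdγ⟩ a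
    have h2 : μ z (Γ z v a) = 0 := by rw [hz]; rfl
    rw [h2, sub_zero]
    -- the derivative of t ↦ μ (γ t) at 0 is (fderiv ℝ μ z) v
    have hcomp : HasDerivAt (fun t => μ (γ t)) (fderiv ℝ μ z v) 0 := by
      have hμz : HasFDerivAt μ (fderiv ℝ μ z) (γ 0) := hγ0 ▸ (hμdiff z).hasFDerivAt
      exact hμz.comp_hasDerivAt 0 hdγ
    have hconst : (fun t : ℝ => μ (γ t)) = fun _ => (0 : A₀ →L[ℝ] V) := by
      funext t; exact hγ t
    have hzero : HasDerivAt (fun t : ℝ => μ (γ t)) 0 0 := by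
      rw [hconst]; exact hasDerivAt_const 0 0
    have := hcomp.unique hzero
    rw [this]; rfl
  exact ⟨htan, hker, fun v hv a => (hker v).mp (htan v hv) a⟩
end
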